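/- Let k be a commutative ring and V = k^n with basis v_1,...,v_n. As left k[W_{n-1}]-modules, the submodule V^{⊗r} ⊗ v_n ⊆ V^{⊗(r+1)} is isomorphic to the direct sum over l = 1, ..., min(n, r+1) of S(r+1,l) copies of H_{n-1}(l-1), where S(r+1,l) is the number of set-partitions of {1,...,r+1} into exactly l nonempty blocks and H_{n-1}(m) is the k[W_{n-1}]-submodule of U^{⊗m} generated by v_{n-m} ⊗ ... ⊗ v_{n-1}, with U the span of v_1,...,v_{n-1}. -/

import Mathlib

noncomputable section

open Equiv

/-- The linear action of a group `G` on the free `k`-module `X → k` of functions,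
induced from a `G`-action on `X` by `(g • f) x = f (g⁻¹ • x)`. -/
def actEnd (k : Type) [CommRing k] (G : Type) [Group G] (X : Type) [MulAction G X] :
    G →* Module.End k (X → k) where
  toFun g := LinearMap.funLeft k k fun x => g⁻¹ • x
  map_one' := by
    ext f x
    simp
  map_mul' g₁ g₂ := by
    ext f x
    simp [mul_smul]

/-- The diagonal (value-permutation) action of the symmetric group `W_n` on
`V^{⊗r}` (`V = k^n`), modelled as the free `k`-module on multi-indices `Fin r → Fin n`;
on basis vectors, `w ⬝ (v_{i_1} ⊗ ⋯ ⊗ v_{i_r}) = v_{w i_1} ⊗ ⋯ ⊗ v_{w i_r}`. -/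
def permEnd (k : Type) [CommRing k] (n r : ℕ) :
    Equiv.Perm (Fin n) →* Module.End k ((Fin r → Fin n) → k) :=
  actEnd k (Equiv.Perm (Fin n)) (Fin r → Fin n)

/-- `Φ_{n,r} : k[W_n] → End_k(V^{⊗r})`. -/
def PhiAlg (k : Type) [CommRing k] (n r : ℕ) :
    MonoidAlgebra k (Equiv.Perm (Fin n)) →ₐ[k] Module.End k ((Fin r → Fin n) → k) :=
  MonoidAlgebra.lift k (Module.End k ((Fin r → Fin n) → k)) (Equiv.Perm (Fin n)) (permEnd k n r)

/-- The restriction of `Φ_{n,r}` to the group algebra of a subgroup `G ≤ W_n`. -/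
def PhiSub (k : Type) [CommRing k] (n r : ℕ) (G : Subgroup (Equiv.Perm (Fin n))) :
    MonoidAlgebra k ↥G →ₐ[k] Module.End k ((Fin r → Fin n) → k) :=
  MonoidAlgebra.lift k (Module.End k ((Fin r → Fin n) → k)) ↥G ((permEnd k n r).comp G.subtype)

/-- `W_{n-1} = {w ∈ W_n : w(n) = n}`, the stabilizer of the last basis vector. -/
def stabLast (n : ℕ) (hn : 0 < n) : Subgroup (Equiv.Perm (Fin n)) :=
  MulAction.stabilizer (Equiv.Perm (Fin n)) (⟨n - 1, Nat.sub_lt hn Nat.one_pos⟩ : Fin n)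

/-- `V(Λ)`: the span of the basis tensors whose multi-index has value-type `Λ`
(the value-type of a multi-index `i` is the set-partition `Setoid.ker i` by fibers). -/
def Vpart (k : Type) [CommRing k] (n r : ℕ) (Λ : Setoid (Fin r)) :
    Submodule k ((Fin r → Fin n) → k) :=
  Submodule.span k {f | ∃ i : Fin r → Fin n, Setoid.ker i = Λ ∧ f = Pi.single i 1}

/-- `V'(Λ')`: the span of the basis tensors `v_{i_1} ⊗ ⋯ ⊗ v_{i_r} ⊗ v_n`
whose multi-index `(i_1, …, i_r, n)` has value-type `Λ'`. -/
def Vpart' (k : Type) [CommRing k] (n r : ℕ) (hn : 0 < n) (Λ' : Setoid (Fin (r + 1))) :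
    Submodule k ((Fin (r + 1) → Fin n) → k) :=
  Submodule.span k {f | ∃ i : Fin (r + 1) → Fin n, Setoid.ker i = Λ' ∧
    i (Fin.last r) = (⟨n - 1, Nat.sub_lt hn Nat.one_pos⟩ : Fin n) ∧ f = Pi.single i 1}

/-- The submodule `V^{⊗r} ⊗ v_n ⊆ V^{⊗(r+1)}`. -/
def lastSub (k : Type) [CommRing k] (n r : ℕ) (hn : 0 < n) :
    Submodule k ((Fin (r + 1) → Fin n) → k) :=
  Submodule.span k {f | ∃ i : Fin (r + 1) → Fin n,
    i (Fin.last r) = (⟨n - 1, Nat.sub_lt hn Nat.one_pos⟩ : Fin n) ∧ f = Pi.single i 1}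

/-- The multi-index of the tensor `v_{n-l+1} ⊗ ⋯ ⊗ v_n`. -/
def baseIdx (n l : ℕ) (h : l ≤ n) : Fin l → Fin n :=
  fun α => ⟨n - l + α.1, by have := α.isLt; omega⟩

/-- `H_n(l)`: the `k[W_n]`-submodule of `V^{⊗l}` generated by `v_{n-l+1} ⊗ ⋯ ⊗ v_n`. -/
def Hmod (k : Type) [CommRing k] (n l : ℕ) (h : l ≤ n) :
    Submodule k ((Fin l → Fin n) → k) :=
  Submodule.span k
    (Set.range fun w : Equiv.Perm (Fin n) => permEnd k n l w (Pi.single (baseIdx n l h) 1))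

/-- The multi-index of the tensor `v_{n-m} ⊗ ⋯ ⊗ v_{n-1}` (inside `U = ⟨v_1, …, v_{n-1}⟩`). -/
def baseIdx' (n m : ℕ) (h : m < n) : Fin m → Fin n :=
  fun α => ⟨n - 1 - m + α.1, by have := α.isLt; omega⟩

/-- `H_{n-1}(m)`: the `k[W_{n-1}]`-submodule of `U^{⊗m}` generated by
`v_{n-m} ⊗ ⋯ ⊗ v_{n-1}`, where `U = ⟨v_1, …, v_{n-1}⟩`. -/
def Hprime (k : Type) [CommRing k] (n m : ℕ) (h : m < n) :
    Submodule k ((Fin m → Fin n) → k) :=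
  Submodule.span k
    (Set.range fun w : ↥(stabLast n (by omega)) =>
      permEnd k n m ↑w (Pi.single (baseIdx' n m h) 1))

/-- The Young subgroup `W_{(n-l,1^l)}` of permutations fixing each of the last `l` points. -/
def fixTop (n l : ℕ) : Subgroup (Equiv.Perm (Fin n)) where
  carrier := {w | ∀ j : Fin n, n - l ≤ (j : ℕ) → w j = j}
  one_mem' := by intro j _; rfl
  mul_mem' := by
    intro a b ha hb j hj
    simp only [Set.mem_setOf_eq] at ha hb
    rw [Equiv.Perm.mul_apply, hb j hj, ha j hj]
  inv_mem' := by
    intro a ha j hj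
    simp only [Set.mem_setOf_eq] at ha
    conv_lhs => rw [← ha j hj]
    exact Equiv.symm_apply_apply a j

/-- The index of the consecutive block (with block sizes `lam`) containing position `x`. -/
def blockIdx (lam : List ℕ) (x : ℕ) : ℕ :=
  ((List.range lam.length).filter fun t => (lam.take (t + 1)).sum ≤ x).length

/-- The Young subgroup `W_λ ≤ W_d`: permutations preserving each consecutive block
of sizes `λ_1, λ_2, …`. -/
def youngSubgroup (d : ℕ) (lam : List ℕ) : Subgroup (Equiv.Perm (Fin d)) where
  carrier := {w | ∀ j : Fin d, blockIdx lam ((w j : Fin d) : ℕ) = blockIdx lam (j : ℕ)}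
  one_mem' := by intro j; rfl
  mul_mem' := by
    intro a b ha hb j
    simp only [Set.mem_setOf_eq] at ha hb
    rw [Equiv.Perm.mul_apply, ha (b j), hb j]
  inv_mem' := by
    intro a ha j
    simp only [Set.mem_setOf_eq] at ha
    conv_rhs => rw [show j = a (a⁻¹ j) from (Equiv.apply_symm_apply a j).symm]
    rw [ha (a⁻¹ j)]

/-- `x_λ = Σ_{w ∈ W_λ} w ∈ k[W_d]`. -/
def xElt (k : Type) [CommRing k] (d : ℕ) (lam : List ℕ) :
    MonoidAlgebra k (Equiv.Perm (Fin d)) :=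
  letI := Classical.decPred (· ∈ youngSubgroup d lam)
  ∑ w ∈ Finset.univ.filter (· ∈ youngSubgroup d lam), MonoidAlgebra.single w (1 : k)

/-- `y_λ = Σ_{w ∈ W_λ} sgn(w) w ∈ k[W_d]`. -/
def yElt (k : Type) [CommRing k] (d : ℕ) (lam : List ℕ) :
    MonoidAlgebra k (Equiv.Perm (Fin d)) :=
  letI := Classical.decPred (· ∈ youngSubgroup d lam)
  ∑ w ∈ Finset.univ.filter (· ∈ youngSubgroup d lam),
    MonoidAlgebra.single w ((Equiv.Perm.sign w : ℤ) : k)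

/-- `y_λ = Σ_{w ∈ W_λ ∩ G} sgn(w) w`, as an element of the group algebra of a
subgroup `G ≤ W_d` (for `G = W_{n-1}` and `λ ⊢ n-1` this is the usual `y_λ ∈ k[W_{n-1}]`). -/
def yEltSub (k : Type) [CommRing k] {d : ℕ} (G : Subgroup (Equiv.Perm (Fin d)))
    (lam : List ℕ) : MonoidAlgebra k ↥G :=
  letI : Fintype ↥G := Fintype.ofFinite ↥G
  letI := Classical.decPred fun w : ↥G => (w : Equiv.Perm (Fin d)) ∈ youngSubgroup d lam
  ∑ w ∈ Finset.univ.filter (fun w : ↥G => (w : Equiv.Perm (Fin d)) ∈ youngSubgroup d lam),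
    MonoidAlgebra.single w ((Equiv.Perm.sign (w : Equiv.Perm (Fin d)) : ℤ) : k)

/-- The dominance order on partitions (as lists of parts): `lam ⊵ mu`. -/
def Dominates (lam mu : List ℕ) : Prop :=
  ∀ t : ℕ, (mu.take t).sum ≤ (lam.take t).sum

/-- The conjugate (transpose) partition: `μᵀ_i = #{j : μ_j ≥ i}`. -/
def conjList (mu : List ℕ) : List ℕ :=
  (List.range mu.headI).map fun i => (mu.filter fun p => i < p).length

/-- `lam` is a partition of `d`: positive parts, in weakly decreasing order, summing to `d`. -/
def IsPartitionList (d : ℕ) (lam : List ℕ) : Prop :=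
  (∀ p ∈ lam, 0 < p) ∧ lam.sum = d ∧ lam.Pairwise (· ≥ ·)

/-- The hook partition `α(d,r) = (d-r, 1^r)`. -/
def hookPartition (d r : ℕ) : List ℕ := (d - r) :: List.replicate r 1

/-- The representation of `k[W_d]` on the permutation module `M^λ`, the free `k`-module
on the left cosets `W_d / W_λ` with `W_d` acting by left translation. -/
def PhiQuot (k : Type) [CommRing k] (d : ℕ) (lam : List ℕ) :
    MonoidAlgebra k (Equiv.Perm (Fin d)) →ₐ[k]
      Module.End k ((Equiv.Perm (Fin d) ⧸ youngSubgroup d lam) → k) :=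
  MonoidAlgebra.lift k _ _
    (actEnd k (Equiv.Perm (Fin d)) (Equiv.Perm (Fin d) ⧸ youngSubgroup d lam))

/-- The representation of `k[G]` (for `G ≤ W_d`) on the permutation module on the
left cosets `G / (G ∩ W_λ)`. -/
def PhiQuotSub (k : Type) [CommRing k] {d : ℕ} (G : Subgroup (Equiv.Perm (Fin d)))
    (lam : List ℕ) :
    MonoidAlgebra k ↥G →ₐ[k]
      Module.End k ((↥G ⧸ Subgroup.comap G.subtype (youngSubgroup d lam)) → k) :=
  MonoidAlgebra.lift k _ _
    (actEnd k ↥G (↥G ⧸ Subgroup.comap G.subtype (youngSubgroup d lam)))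

/-- The Stirling number of the second kind `S(r,l)`: the number of set-partitions
of an `r`-element set into exactly `l` nonempty blocks. -/
def stirling (r l : ℕ) : ℕ :=
  Nat.card {Λ : Setoid (Fin r) // Nat.card (Quotient Λ) = l}

/-!
A basis tensor `v_{i_1} ⊗ ⋯ ⊗ v_{i_r} ⊗ v_n` is determined by its value type, the set-partition
`ker i` of `{1, …, r+1}` into some `l + 1 ≤ min(n, r+1)` blocks, together with the injective
assignment of values in `{1, …, n-1}` to the `l` blocks not containing `r + 1`. On the other
side, `H_{n-1}(l)` is exactly the span of the basis tensors `v_{u_1} ⊗ ⋯ ⊗ v_{u_l}` with `u`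
injective and avoiding `n`, because `W_{n-1}` permutes such `u` transitively. Matching the two
bases gives the isomorphism, and it commutes with `W_{n-1}`, which acts on values only.
-/

open Function

section SupportedFunctions

variable (k : Type) [CommRing k] {X : Type*}

def funSupported (P : X → Prop) : Submodule k (X → k) where
  carrier := {f | ∀ x, ¬ P x → f x = 0}
  add_mem' ha hb x hx := by simp [ha x hx, hb x hx]
  zero_mem' _ _ := rfl
  smul_mem' c f hf x hx := by simp [hf x hx]

variable {k}

theorem span_single_eq_funSupported [Finite X] [DecidableEq X] (P : X → Prop) :
    Submodule.span k {f : X → k | ∃ x, P x ∧ f = Pi.single x 1} = funSupported k P := by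
  have := Fintype.ofFinite X
  refine le_antisymm (Submodule.span_le.mpr ?_) fun f hf => ?_
  · rintro _ ⟨x, hx, rfl⟩ y hy
    exact Pi.single_eq_of_ne (by rintro rfl; exact hy hx) 1
  · rw [← Finset.univ_sum_single f]
    refine Submodule.sum_mem _ fun x _ => ?_
    by_cases hx : P x
    · rw [← mul_one (f x), ← smul_eq_mul, Pi.single_smul']
      exact Submodule.smul_mem _ _ (Submodule.subset_span ⟨x, hx, rfl⟩)
    · rw [hf x hx, Pi.single_zero]
      exact zero_mem _

variable (k) in
open Classical in
def funSupportedEquiv (P : X → Prop) : funSupported k P ≃ₗ[k] ({x // P x} → k) where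
  toFun f x := f.1 x
  invFun g := ⟨fun x => if h : P x then g ⟨x, h⟩ else 0, fun _ hx => dif_neg hx⟩
  map_add' _ _ := rfl
  map_smul' _ _ := rfl
  left_inv f := Subtype.ext <| funext fun x => by
    by_cases h : P x
    · exact dif_pos h
    · exact (dif_neg h).trans (f.2 x h).symm
  right_inv g := funext fun x => dif_pos x.2

theorem actEnd_mem_funSupported {G : Type} [Group G] {X : Type} [MulAction G X] {P : X → Prop}
    {g : G} (hP : ∀ x, P (g⁻¹ • x) → P x) {f : X → k} (hf : f ∈ funSupported k P) :
    actEnd k G X g f ∈ funSupported k P :=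
  fun x hx => hf _ (mt (hP x) hx)

end SupportedFunctions

section InjectiveAvoiding

variable {ι β : Type*} (b₀ : β)

def IsInjAvoiding (u : ι → β) : Prop :=
  Injective u ∧ ∀ a, u a ≠ b₀

variable {b₀}

theorem IsInjAvoiding.comp_injective {κ : Type*} {u : ι → β} (hu : IsInjAvoiding b₀ u)
    {f : κ → ι} (hf : Injective f) : IsInjAvoiding b₀ (u ∘ f) :=
  ⟨hu.1.comp hf, fun a => hu.2 (f a)⟩

theorem isInjAvoiding_perm_comp_iff {σ : Perm β} (hσ : σ b₀ = b₀) {u : ι → β} :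
    IsInjAvoiding b₀ (σ ∘ u) ↔ IsInjAvoiding b₀ u :=
  and_congr (σ.injective.of_comp_iff u) (forall_congr' fun _ => σ.injective.ne_iff' hσ)

theorem exists_perm_fixing_comp_eq [Finite ι] {u v : ι → β} (hu : IsInjAvoiding b₀ u)
    (hv : IsInjAvoiding b₀ v) : ∃ σ : Perm β, σ b₀ = b₀ ∧ σ ∘ u = v := by
  have inj {w : ι → β} (hw : IsInjAvoiding b₀ w) : Injective fun o : Option ι => o.elim b₀ w := by
    rintro (_ | a) (_ | b) h
    exacts [rfl, (hw.2 b h.symm).elim, (hw.2 a h).elim, congrArg some (hw.1 h)]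
  obtain ⟨σ, hσ⟩ := Perm.exists_extending_pair _ _ (inj hu) (inj hv)
  exact ⟨σ, hσ none, funext fun a => hσ (some a)⟩

end InjectiveAvoiding

def lastIdx (n : ℕ) (hn : 0 < n) : Fin n := ⟨n - 1, Nat.sub_lt hn Nat.one_pos⟩

theorem permEnd_apply (k : Type) [CommRing k] {n m : ℕ} (w : Perm (Fin n))
    (f : (Fin m → Fin n) → k) (i : Fin m → Fin n) :
    permEnd k n m w f i = f (⇑w⁻¹ ∘ i) :=
  rfl

theorem permEnd_single (k : Type) [CommRing k] {n m : ℕ} (w : Perm (Fin n))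
    (i : Fin m → Fin n) : permEnd k n m w (Pi.single i 1) = Pi.single (w ∘ i) 1 := by
  ext j
  simp only [permEnd_apply, Pi.single_apply, Perm.inv_def, Equiv.symm_comp_eq]

theorem lastSub_eq_funSupported (k : Type) [CommRing k] (n r : ℕ) (hn : 0 < n) :
    lastSub k n r hn =
      funSupported k fun i : Fin (r + 1) → Fin n => i (Fin.last r) = lastIdx n hn :=
  span_single_eq_funSupported _

theorem baseIdx'_isInjAvoiding {n m : ℕ} (h : m < n) :
    IsInjAvoiding (lastIdx n (by omega)) (baseIdx' n m h) := by
  refine ⟨fun a b hab => Fin.ext ?_, fun a hc => ?_⟩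
  · simp only [baseIdx', Fin.ext_iff] at hab
    omega
  · simp only [baseIdx', lastIdx, Fin.ext_iff] at hc
    omega

theorem Hprime_eq_funSupported (k : Type) [CommRing k] {n m : ℕ} (h : m < n) :
    Hprime k n m h = funSupported k (IsInjAvoiding (β := Fin n) (lastIdx n (by omega))) := by
  rw [Hprime, ← span_single_eq_funSupported]
  congr 1
  ext f
  constructor
  · rintro ⟨w, rfl⟩
    refine ⟨_, (isInjAvoiding_perm_comp_iff w.2).mpr (baseIdx'_isInjAvoiding h), ?_⟩
    exact permEnd_single k _ _
  · rintro ⟨u, hu, rfl⟩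
    obtain ⟨σ, hσ, rfl⟩ := exists_perm_fixing_comp_eq (baseIdx'_isInjAvoiding h) hu
    exact ⟨⟨σ, hσ⟩, permEnd_single k _ _⟩

section Glue

variable {α β : Type*} (Λ : Setoid α) (a₀ : α)

abbrev OtherClass : Type _ := {q : Quotient Λ // q ≠ ⟦a₀⟧}

theorem mk_ne_mk_of_not_rel {x : α} (hx : ¬ Λ x a₀) : (⟦x⟧ : Quotient Λ) ≠ ⟦a₀⟧ :=
  mt Quotient.eq.mp hx

open Classical in
def glue (b₀ : β) (u : OtherClass Λ a₀ → β) (x : α) : β :=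
  if hx : Λ x a₀ then b₀ else u ⟨⟦x⟧, mk_ne_mk_of_not_rel Λ a₀ hx⟩

variable {Λ a₀}

theorem glue_of_rel {b₀ : β} (u : OtherClass Λ a₀ → β) {x : α} (hx : Λ x a₀) :
    glue Λ a₀ b₀ u x = b₀ :=
  dif_pos hx

theorem glue_of_not_rel {b₀ : β} (u : OtherClass Λ a₀ → β) {x : α} (hx : ¬ Λ x a₀) :
    glue Λ a₀ b₀ u x = u ⟨⟦x⟧, mk_ne_mk_of_not_rel Λ a₀ hx⟩ :=
  dif_neg hx

theorem glue_self {b₀ : β} (u : OtherClass Λ a₀ → β) : glue Λ a₀ b₀ u a₀ = b₀ :=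
  glue_of_rel u (Λ.refl a₀)

theorem glue_out (b₀ : β) (u : OtherClass Λ a₀ → β) (q : OtherClass Λ a₀) :
    glue Λ a₀ b₀ u q.1.out = u q := by
  have hq : ¬ Λ q.1.out a₀ := fun h => q.2 (by rw [← Quotient.out_eq q.1]; exact Quotient.sound h)
  rw [glue_of_not_rel u hq]
  congr
  exact Quotient.out_eq _

theorem glue_injective (b₀ : β) : Injective (glue Λ a₀ b₀) := fun u v h =>
  funext fun q => by rw [← glue_out b₀ u, ← glue_out b₀ v, h]

theorem comp_glue {γ : Type*} (g : β → γ) (b₀ : β) (u : OtherClass Λ a₀ → β) :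
    g ∘ glue Λ a₀ b₀ u = glue Λ a₀ (g b₀) (g ∘ u) := by
  funext x
  by_cases hx : Λ x a₀
  · simp only [comp_apply, glue_of_rel _ hx]
  · simp only [comp_apply, glue_of_not_rel _ hx]

theorem ker_glue {b₀ : β} {u : OtherClass Λ a₀ → β} (hu : IsInjAvoiding b₀ u) :
    Setoid.ker (glue Λ a₀ b₀ u) = Λ := by
  ext x y
  rw [Setoid.ker_def]
  by_cases hx : Λ x a₀ <;> by_cases hy : Λ y a₀
  · simp only [glue_of_rel u hx, glue_of_rel u hy, true_iff]
    exact Λ.trans hx (Λ.symm hy)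
  · simp only [glue_of_rel u hx, glue_of_not_rel u hy]
    exact iff_of_false (hu.2 _).symm fun h => hy (Λ.trans (Λ.symm h) hx)
  · simp only [glue_of_not_rel u hx, glue_of_rel u hy]
    exact iff_of_false (hu.2 _) fun h => hx (Λ.trans h hy)
  · simp only [glue_of_not_rel u hx, glue_of_not_rel u hy, hu.1.eq_iff, Subtype.mk.injEq,
      Quotient.eq]

theorem exists_glue_eq {i : α → β} (hΛ : Setoid.ker i = Λ) :
    ∃ u : OtherClass Λ a₀ → β, IsInjAvoiding (i a₀) u ∧ glue Λ a₀ (i a₀) u = i := by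
  subst hΛ
  refine ⟨fun q => i q.1.out, ⟨fun q q' h => Subtype.ext ?_, fun q h => q.2 ?_⟩, funext fun x => ?_⟩
  · rw [← Quotient.out_eq q.1, ← Quotient.out_eq q'.1]
    exact Quotient.sound h
  · rw [← Quotient.out_eq q.1]
    exact Quotient.sound h
  · by_cases hx : Setoid.ker i x a₀
    · exact (glue_of_rel _ hx).trans hx.symm
    · exact (glue_of_not_rel _ hx).trans (Setoid.ker_apply_mk_out x)

end Glue

instance Setoid.finite {α : Type*} [Finite α] : Finite (Setoid α) :=
  Finite.of_injective (fun Λ : Setoid α => ⇑Λ) fun _ _ => Setoid.eq_iff_rel_eq.mpr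

theorem card_otherClass {α : Type*} [Finite α] (Λ : Setoid α) (a₀ : α) :
    Nat.card (OtherClass Λ a₀) = Nat.card (Quotient Λ) - 1 := by
  classical
  have := Fintype.ofFinite (Quotient Λ)
  rw [Nat.card_eq_fintype_card, Nat.card_eq_fintype_card]
  exact Set.card_ne_eq _

theorem card_quotient_ker_le {α β : Type*} [Finite α] [Finite β] (i : α → β) :
    Nat.card (Quotient (Setoid.ker i)) ≤ min (Nat.card α) (Nat.card β) :=
  le_min (Nat.card_le_card_of_surjective _ Quotient.mk_surjective)
    (Nat.card_le_card_of_injective _ (Setoid.kerLift_injective i))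

section StirlingIndex

variable {r l : ℕ}

def partitionEquiv (r l : ℕ) :
    Fin (stirling r l) ≃ {Λ : Setoid (Fin r) // Nat.card (Quotient Λ) = l} :=
  (Finite.equivFinOfCardEq rfl).symm

def partitionOf (j : Fin (stirling (r + 1) (l + 1))) : Setoid (Fin (r + 1)) :=
  (partitionEquiv (r + 1) (l + 1) j).1

theorem card_quotient_partitionOf (j : Fin (stirling (r + 1) (l + 1))) :
    Nat.card (Quotient (partitionOf j)) = l + 1 :=
  (partitionEquiv (r + 1) (l + 1) j).2

def otherClassEquiv (j : Fin (stirling (r + 1) (l + 1))) :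
    OtherClass (partitionOf j) (Fin.last r) ≃ Fin l :=
  Finite.equivFinOfCardEq <| by
    rw [card_otherClass, card_quotient_partitionOf, Nat.add_sub_cancel]

end StirlingIndex

section TensorIndex

variable (n r : ℕ) (hn : 0 < n)

/-- Indexes the basis of `⨁_l H_{n-1}(l)^{S(r+1,l+1)}`, as `LastIndex` indexes that of
`V^{⊗r} ⊗ v_n`. -/
abbrev SummandIndex : Type :=
  Σ l : Fin (min n (r + 1)), Σ _ : Fin (stirling (r + 1) (l.1 + 1)),
    {u : Fin l.1 → Fin n // IsInjAvoiding (lastIdx n hn) u}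

abbrev LastIndex : Type :=
  {i : Fin (r + 1) → Fin n // i (Fin.last r) = lastIdx n hn}

variable {n r hn}

def summandToLast (s : SummandIndex n r hn) : LastIndex n r hn :=
  ⟨glue _ _ (lastIdx n hn) (s.2.2.1 ∘ otherClassEquiv s.2.1), glue_self _⟩

theorem ker_summandToLast (s : SummandIndex n r hn) :
    Setoid.ker (summandToLast s).1 = partitionOf s.2.1 :=
  ker_glue (s.2.2.2.comp_injective (otherClassEquiv _).injective)

theorem summandToLast_injective : Injective (summandToLast (n := n) (r := r) (hn := hn)) := by
  rintro ⟨l, j, u, hu⟩ ⟨l', j', u', hu'⟩ h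
  have hker : partitionOf j = partitionOf j' := by
    rw [← ker_summandToLast ⟨l, j, u, hu⟩, ← ker_summandToLast ⟨l', j', u', hu'⟩, h]
  obtain rfl : l = l' := Fin.ext <| Nat.succ_injective <|
    (card_quotient_partitionOf j).symm.trans (hker ▸ card_quotient_partitionOf j')
  obtain rfl : j = j' := (partitionEquiv _ _).injective (Subtype.ext hker)
  obtain rfl : u = u' :=
    (otherClassEquiv j).surjective.injective_comp_right (glue_injective _ (congrArg Subtype.val h))
  rfl

theorem summandToLast_surjective : Surjective (summandToLast (n := n) (r := r) (hn := hn)) := by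
  rintro ⟨i, hi⟩
  have hpos : 0 < Nat.card (Quotient (Setoid.ker i)) := Nat.card_pos
  have hle := card_quotient_ker_le i
  simp only [Nat.card_eq_fintype_card, Fintype.card_fin] at hle
  set l : Fin (min n (r + 1)) := ⟨Nat.card (Quotient (Setoid.ker i)) - 1, by omega⟩
  set j := (partitionEquiv (r + 1) (l.1 + 1)).symm ⟨Setoid.ker i, by simp only [l]; omega⟩
  have hj : Setoid.ker i = partitionOf j := by simp [j, partitionOf]
  obtain ⟨u, hu, hglue⟩ := exists_glue_eq (a₀ := Fin.last r) hj
  rw [hi] at hu hglue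
  refine ⟨⟨l, j, u ∘ (otherClassEquiv j).symm, hu.comp_injective (Equiv.injective _)⟩,
    Subtype.ext ?_⟩
  simpa [summandToLast, comp_assoc] using hglue

variable (n r hn) in
def summandEquivLast : SummandIndex n r hn ≃ LastIndex n r hn :=
  Equiv.ofBijective summandToLast ⟨summandToLast_injective, summandToLast_surjective⟩

theorem perm_comp_summandToLast {σ : Perm (Fin n)} (hσ : σ (lastIdx n hn) = lastIdx n hn)
    (l : Fin (min n (r + 1))) (j : Fin (stirling (r + 1) (l.1 + 1))) {u : Fin l.1 → Fin n}
    (hu : IsInjAvoiding (lastIdx n hn) u) :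
    σ ∘ (summandToLast ⟨l, j, u, hu⟩).1
      = (summandToLast ⟨l, j, σ ∘ u, (isInjAvoiding_perm_comp_iff hσ).mpr hu⟩).1 := by
  simp only [summandToLast, comp_glue, hσ, comp_assoc]

end TensorIndex

section Decomposition

variable (k : Type) [CommRing k] {n : ℕ} (r : ℕ) (hn : 0 < n)

theorem permEnd_mem_lastSub (w : stabLast n hn) {v : (Fin (r + 1) → Fin n) → k}
    (hv : v ∈ lastSub k n r hn) : permEnd k n (r + 1) w v ∈ lastSub k n r hn := by
  rw [lastSub_eq_funSupported] at hv ⊢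
  refine actEnd_mem_funSupported (fun i hi => ?_) hv
  exact (w⁻¹).1.injective (hi.trans (w⁻¹).2.symm)

theorem permEnd_mem_Hprime {m : ℕ} (hm : m < n) (w : stabLast n hn)
    {v : (Fin m → Fin n) → k} (hv : v ∈ Hprime k n m hm) :
    permEnd k n m w v ∈ Hprime k n m hm := by
  rw [Hprime_eq_funSupported] at hv ⊢
  exact actEnd_mem_funSupported (fun u => (isInjAvoiding_perm_comp_iff (w⁻¹).2).mp) hv

def lastSubEquiv :
    lastSub k n r hn ≃ₗ[k]
      ((l : Fin (min n (r + 1))) → Fin (stirling (r + 1) (l.1 + 1)) →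
        Hprime k n l.1 (l.isLt.trans_le (min_le_left _ _))) :=
  (LinearEquiv.ofEq _ _ (lastSub_eq_funSupported k n r hn)).trans <|
    (funSupportedEquiv k _).trans <|
    (LinearEquiv.funCongrLeft k k (summandEquivLast n r hn)).trans <|
    (LinearEquiv.piCurry k fun _ _ => k).trans <|
    LinearEquiv.piCongrRight fun _ => (LinearEquiv.piCurry k fun _ _ => k).trans <|
    LinearEquiv.piCongrRight fun _ =>
      ((LinearEquiv.ofEq _ _ (Hprime_eq_funSupported k _)).trans (funSupportedEquiv k _)).symm

open Classical in
theorem lastSubEquiv_apply (x : lastSub k n r hn) (l : Fin (min n (r + 1)))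
    (j : Fin (stirling (r + 1) (l.1 + 1))) (u : Fin l.1 → Fin n) :
    (lastSubEquiv k r hn x l j : (Fin l.1 → Fin n) → k) u =
      if hu : IsInjAvoiding (lastIdx n hn) u then x.1 (summandToLast ⟨l, j, u, hu⟩).1 else 0 :=
  rfl

theorem lastSubEquiv_permEnd (w : stabLast n hn) (x : lastSub k n r hn)
    (l : Fin (min n (r + 1))) (j : Fin (stirling (r + 1) (l.1 + 1))) :
    (lastSubEquiv k r hn ⟨permEnd k n (r + 1) w x, permEnd_mem_lastSub k r hn w x.2⟩ l j :
        (Fin l.1 → Fin n) → k) =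
      permEnd k n l.1 w (lastSubEquiv k r hn x l j) := by
  classical
  have hw : (w⁻¹ : Perm (Fin n)) (lastIdx n hn) = lastIdx n hn := (w⁻¹).2
  ext u
  simp only [lastSubEquiv_apply, permEnd_apply, isInjAvoiding_perm_comp_iff hw]
  split_ifs with hu
  · rw [perm_comp_summandToLast hw]
  · rfl

end Decomposition

/-- As left `k[W_{n-1}]`-modules,
`V^{⊗r} ⊗ v_n ≅ ⨁_{l=1}^{min(n,r+1)} H_{n-1}(l-1)^{S(r+1,l)}`. -/
theorem stmt_10 (k : Type) [CommRing k] (n r : ℕ) (hn : 0 < n) :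
    ∃ (hsrc : ∀ (w : ↥(stabLast n hn)) (v : (Fin (r + 1) → Fin n) → k),
        v ∈ lastSub k n r hn → permEnd k n (r + 1) ↑w v ∈ lastSub k n r hn)
      (hst : ∀ (m : ℕ) (hm : m < n) (w : ↥(stabLast n hn)) (v : (Fin m → Fin n) → k),
        v ∈ Hprime k n m hm → permEnd k n m ↑w v ∈ Hprime k n m hm)
      (e : ↥(lastSub k n r hn) ≃ₗ[k]
        ((l : Fin (min n (r + 1))) → Fin (stirling (r + 1) (l.1 + 1)) →
          ↥(Hprime k n l.1 (by have := l.isLt; omega)))),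
      ∀ (w : ↥(stabLast n hn)) (x : ↥(lastSub k n r hn))
        (l : Fin (min n (r + 1))) (j : Fin (stirling (r + 1) (l.1 + 1))),
        e ⟨permEnd k n (r + 1) ↑w ↑x, hsrc w ↑x x.2⟩ l j =
          ⟨permEnd k n l.1 ↑w ↑(e x l j),
            hst l.1 (by have := l.isLt; omega) w ↑(e x l j) (e x l j).2⟩ :=
  ⟨fun w _ => permEnd_mem_lastSub k r hn w, fun _ hm w _ => permEnd_mem_Hprime k hn hm w,
    lastSubEquiv k r hn, fun w x l j => Subtype.ext (lastSubEquiv_permEnd k r hn w x l j)⟩
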